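/- For every integer n ≥ 0, the modified Hankel determinant satisfies D̃_n = (Δ_{n+1}/(pq^{n+1};q)_∞) · D_n, where D̃_n = det((s̃_{i+j})_{0 ≤ i,j ≤ n}) and D_n = det((s_{i+j})_{0 ≤ i,j ≤ n}). -/

import Mathlib

/-- Finite q-shifted factorial `(z;q)_n`. -/
noncomputable def qp (z q : ℝ) (n : ℕ) : ℝ := ∏ k ∈ Finset.range n, (1 - z * q ^ k)

/-- Infinite q-shifted factorial `(z;q)_∞`. -/
noncomputable def qpInf (z q : ℝ) : ℝ := ∏' k : ℕ, (1 - z * q ^ k)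

/-- `Δ_n = (pq^n;q)_∞ − (q^n;q)_∞`. -/
noncomputable def Δ (p q : ℝ) (n : ℕ) : ℝ := qpInf (p * q ^ n) q - qpInf (q ^ n) q

/-- Generalized Stieltjes–Wigert moments `s_n = (p;q)_n q^{-(n+1)²/2}`. -/
noncomputable def sw (p q : ℝ) (n : ℕ) : ℝ := qp p q n * q ^ (-(((n : ℝ) + 1) ^ 2) / 2)

/-- Modified moments: `s̃_0 = q^{-1/2}(1 − (q;q)_∞/(pq;q)_∞)` and `s̃_n = s_n` for `n ≥ 1`. -/
noncomputable def swt (p q : ℝ) (n : ℕ) : ℝ :=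
  if n = 0 then q ^ (-(1 : ℝ) / 2) * (1 - qpInf q q / qpInf (p * q) q) else sw p q n

/-!
With `u = q^{-1/2}` the moments are `s_N = (p;q)_N u^{(N+1)^2}`, and the Hankel entry
`s_{i+j+a}` is a row factor times a column factor times `P_j(q^{-i})`, where
`P_j = ∏_{k<j} (X - p q^{a+k})` is monic of degree `j`. So each shifted Hankel determinant
`det (s_{i+j+a})` is an explicit product times the Vandermonde determinant of the nodes `q^{-i}`,
and comparing `a = 2` with `a = 0` gives `(q;q)_n det (s_{i+j+2})_{i,j<n} = q^{1/2} (pq;q)_n D_n`.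

`D̃_n` differs from `D_n` only in the corner entry, so `D̃_n = D_n + (s̃_0 - s_0) det (s_{i+j+2})`,
with `s̃_0 - s_0 = -q^{-1/2} (q;q)_∞ / (pq;q)_∞`. Splitting off the first `n` factors of both
infinite products turns the correction into `-(q^{n+1};q)_∞ / (pq^{n+1};q)_∞ · D_n`.
-/

open Finset Matrix Polynomial

lemma qp_add (z q : ℝ) (m n : ℕ) : qp z q (m + n) = qp z q m * qp (z * q ^ m) q n := by
  simp only [qp, prod_range_add, mul_assoc, ← pow_add]

lemma qp_succ (z q : ℝ) (n : ℕ) : qp z q (n + 1) = (1 - z) * qp (z * q) q n := by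
  simpa [add_comm, qp] using qp_add z q 1 n

lemma prod_range_qp_add_two (p q : ℝ) (n : ℕ) :
    ∏ i ∈ range n, qp p q (i + 2) = qp (p * q) q n * ∏ i ∈ range (n + 1), qp p q i := by
  induction n with
  | zero => simp [qp]
  | succ n ih =>
    rw [prod_range_succ, ih, prod_range_succ _ (n + 1), qp_succ p q (n + 1), qp_succ p q n,
      qp_succ (p * q) q n]
    ring

lemma prod_range_inv_pow_sub {q : ℝ} (hq : q ≠ 0) (n : ℕ) :
    ∏ i ∈ range n, (q⁻¹ ^ n - q⁻¹ ^ i) = q⁻¹ ^ (n * n) * qp q q n := by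
  have hfactor : ∀ i ∈ range n, q⁻¹ ^ n - q⁻¹ ^ i = q⁻¹ ^ n * (1 - q * q ^ (n - 1 - i)) := by
    intro i hi
    rw [← pow_succ', show n - 1 - i + 1 = n - i by grind, pow_sub₀ q hq (by grind), inv_pow,
      inv_pow]
    field_simp
  rw [prod_congr rfl hfactor, prod_mul_distrib, prod_const, card_range, ← pow_mul,
    prod_range_reflect (fun k => 1 - q * q ^ k), qp]

lemma mul_pow_lt_one {z q : ℝ} (hz : z < 1) (hq0 : 0 ≤ q) (hq1 : q ≤ 1) (k : ℕ) :
    z * q ^ k < 1 := by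
  rcases le_or_gt z 0 with h | h
  · nlinarith [pow_nonneg hq0 k]
  · nlinarith [pow_le_one₀ hq0 hq1 (n := k)]

lemma qp_ne_zero {z q : ℝ} (hz : ∀ k : ℕ, z * q ^ k ≠ 1) (n : ℕ) : qp z q n ≠ 0 :=
  prod_ne_zero_iff.mpr fun k _ => sub_ne_zero.mpr (hz k).symm

lemma multipliable_one_sub_mul_pow (z : ℝ) {q : ℝ} (hq : |q| < 1) :
    Multipliable fun k : ℕ => 1 - z * q ^ k := by
  simpa [sub_eq_add_neg] using Real.multipliable_one_add_of_summable
    ((summable_geometric_of_abs_lt_one hq).mul_left (-z))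

lemma qp_mul_qpInf (z : ℝ) {q : ℝ} (hq : |q| < 1) (n : ℕ) :
    qp z q n * qpInf (z * q ^ n) q = qpInf z q := by
  have hshift : (fun i : ℕ => 1 - z * q ^ (i + n)) = fun i => 1 - z * q ^ n * q ^ i := by
    ext i
    ring
  have := Multipliable.prod_mul_tprod_nat_mul' (f := fun k : ℕ => 1 - z * q ^ k) (k := n)
    (hshift ▸ multipliable_one_sub_mul_pow (z * q ^ n) hq)
  rwa [hshift] at this

lemma qpInf_ne_zero {z q : ℝ} (hq : |q| < 1) (hz : ∀ k : ℕ, z * q ^ k ≠ 1) : qpInf z q ≠ 0 := by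
  simpa [qpInf, sub_eq_add_neg] using tprod_one_add_ne_zero_of_summable
    (f := fun k : ℕ => -(z * q ^ k))
    (fun k => by rw [← sub_eq_add_neg]; exact sub_ne_zero.mpr (hz k).symm)
    (by simpa using (summable_geometric_of_abs_lt_one hq).abs.mul_left |z|)

section Determinants

variable {R : Type*} [CommRing R]

lemma det_vandermonde_eq_prod_range (v : ℕ → R) (m : ℕ) :
    (vandermonde fun i : Fin m => v i).det = ∏ j ∈ range m, ∏ i ∈ range j, (v j - v i) := by
  rw [det_vandermonde, prod_comm' (t' := univ) (s' := fun j => Iio j) (by simp),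
    ← Fin.prod_univ_eq_prod_range (fun j => ∏ i ∈ range j, (v j - v i))]
  refine prod_congr rfl fun j _ => ?_
  rw [← Nat.Iio_eq_range, ← Fin.map_valEmbedding_Iio, prod_map]
  rfl

lemma det_of_mul_eval_monic {m : ℕ} (r c x : Fin m → R) (P : Fin m → R[X])
    (hdeg : ∀ j, (P j).natDegree = j) (hmon : ∀ j, (P j).Monic) :
    (of fun i j => r i * c j * (P j).eval (x i)).det
      = (∏ i, r i * c i) * (vandermonde x).det := by
  rw [det_eval_matrixOfPolynomials_eq_det_vandermonde x P hdeg hmon, prod_mul_distrib, mul_assoc,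
    ← det_mul_row, ← det_mul_column]
  congr 1
  ext i j
  simp only [of_apply]
  ring

lemma det_add_single_zero_zero {n : ℕ} (M : Matrix (Fin (n + 1)) (Fin (n + 1)) R) (δ : R) :
    (M + single 0 0 δ).det = M.det + δ * (M.submatrix Fin.succ Fin.succ).det := by
  have hrow : M + single 0 0 δ = M.updateRow 0 (M 0 + δ • Pi.single 0 1) := by
    ext i j
    rcases Fin.eq_zero_or_eq_succ i with rfl | ⟨i, rfl⟩ <;>
      simp [single_apply, Pi.single_apply, eq_comm]
  rw [hrow, det_updateRow_add, updateRow_eq_self, det_updateRow_smul, ← adjugate_apply,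
    adjugate_fin_succ_eq_det_submatrix]
  simp

end Determinants

lemma inv_sqrt_pow_eq_rpow {q : ℝ} (hq : 0 ≤ q) (k : ℕ) : (√q)⁻¹ ^ k = q ^ (-(k : ℝ) / 2) := by
  rw [Real.sqrt_eq_rpow, ← Real.rpow_neg hq, ← Real.rpow_mul_natCast hq]
  ring_nf

lemma inv_sqrt_sq {q : ℝ} (hq : 0 ≤ q) : (√q)⁻¹ ^ 2 = q⁻¹ := by
  rw [inv_pow, Real.sq_sqrt hq]

lemma sw_eq_qp_mul_inv_sqrt_pow (p : ℝ) {q : ℝ} (hq : 0 ≤ q) (N : ℕ) :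
    sw p q N = qp p q N * (√q)⁻¹ ^ ((N + 1) ^ 2) := by
  rw [sw, inv_sqrt_pow_eq_rpow hq]
  push_cast
  ring_nf

lemma swt_zero_sub_sw_zero (p : ℝ) {q : ℝ} (hq : 0 ≤ q) :
    swt p q 0 - sw p q 0 = -((√q)⁻¹ * (qpInf q q / qpInf (p * q) q)) := by
  have hs0 : sw p q 0 = (√q)⁻¹ := by simp [sw_eq_qp_mul_inv_sqrt_pow p hq, qp]
  have hhalf : q ^ (-(1 : ℝ) / 2) = (√q)⁻¹ := by simpa using (inv_sqrt_pow_eq_rpow hq 1).symm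
  rw [swt, if_pos rfl, hs0, hhalf]
  ring

lemma sw_add_add_eq_mul_prod (p : ℝ) {q : ℝ} (hq : 0 < q) (a i j : ℕ) :
    sw p q (i + j + a) = qp p q (i + a) * (√q)⁻¹ ^ ((i + a + 1) ^ 2)
      * (√q)⁻¹ ^ (j * (j + 2 * a + 2)) * ∏ k ∈ range j, (q⁻¹ ^ i - p * q ^ (a + k)) := by
  have hprod : ∏ k ∈ range j, (q⁻¹ ^ i - p * q ^ (a + k))
      = (q⁻¹ ^ i) ^ j * qp (p * q ^ (i + a)) q j := by
    have := pow_card_mul_prod (s := range j) (b := q⁻¹ ^ i)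
      (f := fun k => 1 - p * q ^ (i + a) * q ^ k)
    rw [card_range] at this
    rw [qp, this]
    refine prod_congr rfl fun k _ => ?_
    rw [inv_pow]
    field_simp
    ring
  have hexp : (i + a + j + 1) ^ 2 = (i + a + 1) ^ 2 + j * (j + 2 * a + 2) + 2 * (i * j) := by
    ring
  rw [hprod, sw_eq_qp_mul_inv_sqrt_pow p hq.le, add_right_comm, qp_add, hexp, pow_add, pow_add,
    pow_mul, inv_sqrt_sq hq.le, ← pow_mul]
  ring

lemma det_hankel_sw (p : ℝ) {q : ℝ} (hq : 0 < q) (a m : ℕ) :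
    (of fun i j : Fin m => sw p q (i + j + a)).det
      = (∏ i ∈ range m, qp p q (i + a) * (√q)⁻¹ ^ ((i + a + 1) ^ 2 + i * (i + 2 * a + 2)))
        * ∏ j ∈ range m, ∏ i ∈ range j, (q⁻¹ ^ j - q⁻¹ ^ i) := by
  let P : Fin m → ℝ[X] := fun j => ∏ k ∈ range j, (X - C (p * q ^ (a + k)))
  have hmon : ∀ j, (P j).Monic := fun j => monic_prod_of_monic _ _ fun k _ => monic_X_sub_C _
  have hdeg : ∀ j, (P j).natDegree = j := fun j => by
    simp only [P, natDegree_prod_of_monic (range j) (fun k => X - C (p * q ^ (a + k)))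
      fun k _ => monic_X_sub_C _, natDegree_X_sub_C, sum_const, card_range, smul_eq_mul, mul_one]
  have hentry : (of fun i j : Fin m => sw p q (i + j + a)) = of fun i j : Fin m =>
      (qp p q (i + a) * (√q)⁻¹ ^ (((i : ℕ) + a + 1) ^ 2))
        * (√q)⁻¹ ^ ((j : ℕ) * ((j : ℕ) + 2 * a + 2)) * (P j).eval (q⁻¹ ^ (i : ℕ)) := by
    ext i j
    simp [P, eval_prod, sw_add_add_eq_mul_prod p hq]
  rw [hentry, det_of_mul_eval_monic _ _ _ P hdeg hmon,
    det_vandermonde_eq_prod_range (fun i => q⁻¹ ^ i),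
    Fin.prod_univ_eq_prod_range (fun i => qp p q (i + a) * (√q)⁻¹ ^ ((i + a + 1) ^ 2)
      * (√q)⁻¹ ^ (i * (i + 2 * a + 2)))]
  simp only [mul_assoc, pow_add]

lemma qp_mul_det_hankel_sw_two (p : ℝ) {q : ℝ} (hq : 0 < q) (n : ℕ) :
    qp q q n * (of fun i j : Fin n => sw p q (i + j + 2)).det
      = √q * qp (p * q) q n * (of fun i j : Fin (n + 1) => sw p q (i + j)).det := by
  have hexp : ∑ i ∈ range n, ((i + 2 + 1) ^ 2 + i * (i + 2 * 2 + 2)) + 1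
      = ∑ i ∈ range (n + 1), ((i + 1) ^ 2 + i * (i + 2)) + 2 * (n * n) := by
    induction n with
    | zero => simp
    | succ n ih =>
      rw [sum_range_succ, sum_range_succ _ (n + 1)]
      linarith
  have hpow : (√q)⁻¹ ^ ∑ i ∈ range n, ((i + 2 + 1) ^ 2 + i * (i + 2 * 2 + 2))
      = √q * ((√q)⁻¹ ^ (∑ i ∈ range (n + 1), ((i + 1) ^ 2 + i * (i + 2))) * q⁻¹ ^ (n * n)) := by
    rw [← inv_sqrt_sq hq.le, ← pow_mul, ← pow_add, ← hexp, pow_succ', ← mul_assoc,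
      mul_inv_cancel₀ (Real.sqrt_ne_zero'.mpr hq), one_mul]
  rw [show (of fun i j : Fin (n + 1) => sw p q (i + j))
        = of fun i j : Fin (n + 1) => sw p q (i + j + 0) from rfl,
    det_hankel_sw p hq, det_hankel_sw p hq,
    prod_range_succ (fun j => ∏ i ∈ range j, (q⁻¹ ^ j - q⁻¹ ^ i)) n,
    prod_range_inv_pow_sub hq.ne', prod_mul_distrib, prod_mul_distrib, prod_pow_eq_pow_sum,
    prod_pow_eq_pow_sum, prod_range_qp_add_two]
  simp only [add_zero, mul_zero]
  linear_combination (qp q q n * qp (p * q) q n * (∏ i ∈ range (n + 1), qp p q i)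
    * ∏ j ∈ range n, ∏ i ∈ range j, (q⁻¹ ^ j - q⁻¹ ^ i)) * hpow

lemma hankel_swt_eq_add_single (p q : ℝ) (n : ℕ) :
    (of fun i j : Fin (n + 1) => swt p q (i + j))
      = (of fun i j : Fin (n + 1) => sw p q (i + j)) + single 0 0 (swt p q 0 - sw p q 0) := by
  ext i j
  by_cases h : i = 0 ∧ j = 0
  · obtain ⟨rfl, rfl⟩ := h
    simp
  · have hij : (i : ℕ) + j ≠ 0 := fun hij =>
      h ⟨Fin.val_eq_zero_iff.mp (by omega), Fin.val_eq_zero_iff.mp (by omega)⟩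
    rw [Matrix.add_apply, of_apply, of_apply,
      single_apply_of_ne (h := fun h' => h ⟨h'.1.symm, h'.2.symm⟩), add_zero, swt, if_neg hij]

lemma submatrix_succ_hankel_sw (p q : ℝ) (n : ℕ) :
    (of fun i j : Fin (n + 1) => sw p q (i + j)).submatrix Fin.succ Fin.succ
      = of fun i j : Fin n => sw p q (i + j + 2) := by
  ext i j
  simp only [submatrix_apply, of_apply, Fin.val_succ]
  congr 1
  omega

theorem stmt_8_general (p q : ℝ) (hp1 : p < 1) (hq0 : 0 < q) (hq1 : q < 1) (n : ℕ) :
    (Matrix.of fun i j : Fin (n + 1) => swt p q ((i : ℕ) + (j : ℕ))).det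
      = Δ p q (n + 1) / qpInf (p * q ^ (n + 1)) q *
          (Matrix.of fun i j : Fin (n + 1) => sw p q ((i : ℕ) + (j : ℕ))).det := by
  have hq : |q| < 1 := abs_lt.mpr ⟨by linarith, hq1⟩
  have hne : ∀ {z}, z < 1 → ∀ k : ℕ, z * q ^ k ≠ 1 := fun hz k =>
    (mul_pow_lt_one hz hq0.le hq1.le k).ne
  have hT : qpInf (p * q ^ (n + 1)) q ≠ 0 :=
    qpInf_ne_zero hq (hne (mul_pow_lt_one hp1 hq0.le hq1.le (n + 1)))
  have hpq : qp (p * q) q n ≠ 0 :=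
    qp_ne_zero (hne (by simpa using mul_pow_lt_one hp1 hq0.le hq1.le 1)) n
  rw [hankel_swt_eq_add_single, det_add_single_zero_zero, submatrix_succ_hankel_sw,
    swt_zero_sub_sw_zero p hq0.le, Δ, ← qp_mul_qpInf q hq n, ← qp_mul_qpInf (p * q) hq n,
    ← pow_succ', mul_assoc, ← pow_succ']
  have key := qp_mul_det_hankel_sw_two p hq0 n
  -- opaque to `field_simp`, which would otherwise rewrite `p * q ^ (n + 1)` and lose `hT`
  set T := qpInf (p * q ^ (n + 1)) q
  field_simp
  linear_combination -qpInf (q ^ (n + 1)) q * key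

theorem stmt_8 (p q : ℝ) (hp0 : 0 ≤ p) (hp1 : p < 1) (hq0 : 0 < q) (hq1 : q < 1) (n : ℕ) :
    (Matrix.of fun i j : Fin (n + 1) => swt p q ((i : ℕ) + (j : ℕ))).det
      = Δ p q (n + 1) / qpInf (p * q ^ (n + 1)) q *
          (Matrix.of fun i j : Fin (n + 1) => sw p q ((i : ℕ) + (j : ℕ))).det :=
  stmt_8_general p q hp1 hq0 hq1 n
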